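/- The system C is consistent: no atomic formula p has a proof in C, i.e. there is no deduction of an atomic formula p in C from no undischarged assumptions. -/
import Mathlib

/- Milne's system **C** of classical propositional logic with general
introduction and general elimination rules (Kürbis, "Normalisation and
Subformula Property for a System of Classical Logic with Tarski's Rule").

Formulas are built from atoms by ¬, ∧, ∨, ⊃. -/
inductive Formula : Type
  | atom : ℕ → Formula
  | neg  : Formula → Formula
  | conj : Formula → Formula → Formula
  | disj : Formula → Formula → Formula
  | imp  : Formula → Formula → Formula
  deriving DecidableEq

/-- Raw deduction trees of the system **C**.  Assumption occurrences carry a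
label (natural number) marking their assumption class; each rule that
discharges assumptions records the label(s) of the class(es) it discharges.
Constructor arguments list first the labels, then the formulas figuring in the
rule, then the immediate subdeductions (major premise first for eliminations;
for introductions: the specific premise(s), then the deduction of the
arbitrary premise from the discharged major assumption).

* `ass ℓ A`           : the assumption `A`, in assumption class `ℓ`.
* `andI ℓ A B ΣA ΣB Π` : from `A`, `B` and `C`-from-`[A∧B]^ℓ` infer `C`.
* `andE ℓA ℓB A B M Π` : from `A∧B` and `C`-from-`[A]^ℓA,[B]^ℓB` infer `C`.
* `orI₁ ℓ A B ΣA Π`    : from `A` and `C`-from-`[A∨B]^ℓ` infer `C`.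
* `orI₂ ℓ A B ΣB Π`    : from `B` and `C`-from-`[A∨B]^ℓ` infer `C`.
* `orE ℓA ℓB A B M Π Ξ`: from `A∨B`, `C`-from-`[A]^ℓA`, `C`-from-`[B]^ℓB` infer `C`.
* `impI ℓ A B ΣB Π`    : from `B` and `C`-from-`[A⊃B]^ℓ` infer `C`.
* `tr ℓA ℓAB A B Π Ξ`  : Tarski's Rule: from `C`-from-`[A]^ℓA` and
                         `C`-from-`[A⊃B]^ℓAB` infer `C`.
* `impE ℓ A B M ΣA Π`  : from `A⊃B`, `A` and `C`-from-`[B]^ℓ` infer `C`.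
* `negI ℓA ℓnA A Π Ξ`  : from `C`-from-`[A]^ℓA` and `C`-from-`[¬A]^ℓnA` infer `C`.
* `negE A C M ΣA`      : from `¬A` and `A` infer any `C`. -/
inductive PT : Type
  | ass  : ℕ → Formula → PT
  | andI : ℕ → Formula → Formula → PT → PT → PT → PT
  | andE : ℕ → ℕ → Formula → Formula → PT → PT → PT
  | orI₁ : ℕ → Formula → Formula → PT → PT → PT
  | orI₂ : ℕ → Formula → Formula → PT → PT → PT
  | orE  : ℕ → ℕ → Formula → Formula → PT → PT → PT → PT
  | impI : ℕ → Formula → Formula → PT → PT → PT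
  | tr   : ℕ → ℕ → Formula → Formula → PT → PT → PT
  | impE : ℕ → Formula → Formula → PT → PT → PT → PT
  | negI : ℕ → ℕ → Formula → PT → PT → PT
  | negE : Formula → Formula → PT → PT → PT
  deriving DecidableEq

namespace PT

/-- The conclusion (root formula) of a deduction tree. -/
def concl : PT → Formula
  | .ass _ A => A
  | .andI _ _ _ _ _ r => r.concl
  | .andE _ _ _ _ _ q => q.concl
  | .orI₁ _ _ _ _ q => q.concl
  | .orI₂ _ _ _ _ q => q.concl
  | .orE _ _ _ _ _ q _ => q.concl
  | .impI _ _ _ _ q => q.concl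
  | .tr _ _ _ _ p _ => p.concl
  | .impE _ _ _ _ _ r => r.concl
  | .negI _ _ _ p _ => p.concl
  | .negE _ C _ _ => C

/-- The multiset of open (undischarged) labelled assumptions of a deduction. -/
def openAss : PT → Multiset (ℕ × Formula)
  | .ass ℓ A => {(ℓ, A)}
  | .andI ℓ _ _ p q r =>
      p.openAss + q.openAss + (r.openAss.filter fun z => z.1 ≠ ℓ)
  | .andE ℓA ℓB _ _ p q =>
      p.openAss + (q.openAss.filter fun z => z.1 ≠ ℓA ∧ z.1 ≠ ℓB)
  | .orI₁ ℓ _ _ p q => p.openAss + (q.openAss.filter fun z => z.1 ≠ ℓ)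
  | .orI₂ ℓ _ _ p q => p.openAss + (q.openAss.filter fun z => z.1 ≠ ℓ)
  | .orE ℓA ℓB _ _ p q r =>
      p.openAss + (q.openAss.filter fun z => z.1 ≠ ℓA) +
        (r.openAss.filter fun z => z.1 ≠ ℓB)
  | .impI ℓ _ _ p q => p.openAss + (q.openAss.filter fun z => z.1 ≠ ℓ)
  | .tr ℓA ℓAB _ _ p q =>
      (p.openAss.filter fun z => z.1 ≠ ℓA) + (q.openAss.filter fun z => z.1 ≠ ℓAB)
  | .impE ℓ _ _ p q r =>
      p.openAss + q.openAss + (r.openAss.filter fun z => z.1 ≠ ℓ)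
  | .negI ℓA ℓnA _ p q =>
      (p.openAss.filter fun z => z.1 ≠ ℓA) + (q.openAss.filter fun z => z.1 ≠ ℓnA)
  | .negE _ _ p q => p.openAss + q.openAss

/-- Correctness of a deduction tree: the subdeductions conclude the right
formulas, every open assumption in a discharged class has the form required
by the rule, and (ban on vacuous discharge above arbitrary premises) each
discharge actually discharges at least one assumption occurrence — in `∧E`
at least one of the two classes `[A]`, `[B]` is non-empty, which reflects the
option of discharging only one of the two assumptions. -/
def wf : PT → Prop
  | .ass _ _ => True
  | .andI ℓ A B p q r => p.wf ∧ q.wf ∧ r.wf ∧ p.concl = A ∧ q.concl = B ∧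
      (∀ F, (ℓ, F) ∈ r.openAss → F = Formula.conj A B) ∧
      (ℓ, Formula.conj A B) ∈ r.openAss
  | .andE ℓA ℓB A B p q => p.wf ∧ q.wf ∧ p.concl = Formula.conj A B ∧
      (∀ F, (ℓA, F) ∈ q.openAss → F = A) ∧ (∀ F, (ℓB, F) ∈ q.openAss → F = B) ∧
      ((ℓA, A) ∈ q.openAss ∨ (ℓB, B) ∈ q.openAss)
  | .orI₁ ℓ A B p q => p.wf ∧ q.wf ∧ p.concl = A ∧
      (∀ F, (ℓ, F) ∈ q.openAss → F = Formula.disj A B) ∧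
      (ℓ, Formula.disj A B) ∈ q.openAss
  | .orI₂ ℓ A B p q => p.wf ∧ q.wf ∧ p.concl = B ∧
      (∀ F, (ℓ, F) ∈ q.openAss → F = Formula.disj A B) ∧
      (ℓ, Formula.disj A B) ∈ q.openAss
  | .orE ℓA ℓB A B p q r => p.wf ∧ q.wf ∧ r.wf ∧
      p.concl = Formula.disj A B ∧ q.concl = r.concl ∧
      (∀ F, (ℓA, F) ∈ q.openAss → F = A) ∧ (ℓA, A) ∈ q.openAss ∧
      (∀ F, (ℓB, F) ∈ r.openAss → F = B) ∧ (ℓB, B) ∈ r.openAss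
  | .impI ℓ A B p q => p.wf ∧ q.wf ∧ p.concl = B ∧
      (∀ F, (ℓ, F) ∈ q.openAss → F = Formula.imp A B) ∧
      (ℓ, Formula.imp A B) ∈ q.openAss
  | .tr ℓA ℓAB A B p q => p.wf ∧ q.wf ∧ p.concl = q.concl ∧
      (∀ F, (ℓA, F) ∈ p.openAss → F = A) ∧ (ℓA, A) ∈ p.openAss ∧
      (∀ F, (ℓAB, F) ∈ q.openAss → F = Formula.imp A B) ∧
      (ℓAB, Formula.imp A B) ∈ q.openAss
  | .impE ℓ A B p q r => p.wf ∧ q.wf ∧ r.wf ∧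
      p.concl = Formula.imp A B ∧ q.concl = A ∧
      (∀ F, (ℓ, F) ∈ r.openAss → F = B) ∧ (ℓ, B) ∈ r.openAss
  | .negI ℓA ℓnA A p q => p.wf ∧ q.wf ∧ p.concl = q.concl ∧
      (∀ F, (ℓA, F) ∈ p.openAss → F = A) ∧ (ℓA, A) ∈ p.openAss ∧
      (∀ F, (ℓnA, F) ∈ q.openAss → F = Formula.neg A) ∧
      (ℓnA, Formula.neg A) ∈ q.openAss
  | .negE A _ p q => p.wf ∧ q.wf ∧ p.concl = Formula.neg A ∧ q.concl = A

/-- The set of formulas that occur as undischarged assumptions of a deduction. -/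
def assumptions (d : PT) : Set Formula := {A | ∃ ℓ, (ℓ, A) ∈ d.openAss}

end PT

/-- Boolean semantics for formulas. -/
def ev (v : ℕ → Bool) : Formula → Bool
  | .atom n => v n
  | .neg A => !ev v A
  | .conj A B => ev v A && ev v B
  | .disj A B => ev v A || ev v B
  | .imp A B => !ev v A || ev v B

theorem sound (v : ℕ → Bool) :
    ∀ d : PT, d.wf → (∀ x ∈ d.openAss, ev v x.2 = true) → ev v d.concl = true := by
  intro d
  induction d with
  | ass ℓ A =>
    intro _ h; exact h (ℓ, A) (by simp [PT.openAss])
  | andI ℓ A B p q r ihp ihq ihr =>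
    intro hwf h
    obtain ⟨hp, hq, hr, hpA, hqB, hℓ, -⟩ := hwf
    have hA : ev v A = true := hpA ▸ ihp hp (fun x hx => h x (by simp [PT.openAss]; tauto))
    have hB : ev v B = true := hqB ▸ ihq hq (fun x hx => h x (by simp [PT.openAss]; tauto))
    show ev v r.concl = true
    apply ihr hr
    rintro ⟨ℓ', A'⟩ hx
    by_cases hc : ℓ' = ℓ
    · subst hc
      have := hℓ A' hx
      subst this
      simp [ev, hA, hB]
    · exact h (ℓ', A') (by simp [PT.openAss, Multiset.mem_filter]; tauto)
  | andE ℓA ℓB A B p q ihp ihq =>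
    intro hwf h
    obtain ⟨hp, hq, hpc, hA, hB, -⟩ := hwf
    have hAB : ev v (Formula.conj A B) = true :=
      hpc ▸ ihp hp (fun x hx => h x (by simp [PT.openAss]; tauto))
    simp [ev] at hAB
    show ev v q.concl = true
    apply ihq hq
    rintro ⟨ℓ', A'⟩ hx
    by_cases hcA : ℓ' = ℓA
    · subst hcA; rw [hA A' hx]; exact hAB.1
    · by_cases hcB : ℓ' = ℓB
      · subst hcB; rw [hB A' hx]; exact hAB.2
      · exact h (ℓ', A') (by simp [PT.openAss, Multiset.mem_filter]; tauto)
  | orI₁ ℓ A B p q ihp ihq =>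
    intro hwf h
    obtain ⟨hp, hq, hpc, hℓ, -⟩ := hwf
    have hA : ev v A = true := hpc ▸ ihp hp (fun x hx => h x (by simp [PT.openAss]; tauto))
    show ev v q.concl = true
    apply ihq hq
    rintro ⟨ℓ', A'⟩ hx
    by_cases hc : ℓ' = ℓ
    · subst hc; rw [hℓ A' hx]; simp [ev, hA]
    · exact h (ℓ', A') (by simp [PT.openAss, Multiset.mem_filter]; tauto)
  | orI₂ ℓ A B p q ihp ihq =>
    intro hwf h
    obtain ⟨hp, hq, hpc, hℓ, -⟩ := hwf
    have hB : ev v B = true := hpc ▸ ihp hp (fun x hx => h x (by simp [PT.openAss]; tauto))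
    show ev v q.concl = true
    apply ihq hq
    rintro ⟨ℓ', A'⟩ hx
    by_cases hc : ℓ' = ℓ
    · subst hc; rw [hℓ A' hx]; simp [ev, hB]
    · exact h (ℓ', A') (by simp [PT.openAss, Multiset.mem_filter]; tauto)
  | orE ℓA ℓB A B p q r ihp ihq ihr =>
    intro hwf h
    obtain ⟨hp, hq, hr, hpc, hqr, hA, -, hB, -⟩ := hwf
    have hAB : ev v (Formula.disj A B) = true :=
      hpc ▸ ihp hp (fun x hx => h x (by simp [PT.openAss]; tauto))
    simp [ev] at hAB
    show ev v q.concl = true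
    rcases hAB with hA' | hB'
    · apply ihq hq
      rintro ⟨ℓ', A'⟩ hx
      by_cases hc : ℓ' = ℓA
      · subst hc; rw [hA A' hx]; exact hA'
      · exact h (ℓ', A') (by simp [PT.openAss, Multiset.mem_filter]; tauto)
    · rw [hqr]
      apply ihr hr
      rintro ⟨ℓ', A'⟩ hx
      by_cases hc : ℓ' = ℓB
      · subst hc; rw [hB A' hx]; exact hB'
      · exact h (ℓ', A') (by simp [PT.openAss, Multiset.mem_filter]; tauto)
  | impI ℓ A B p q ihp ihq =>
    intro hwf h
    obtain ⟨hp, hq, hpc, hℓ, -⟩ := hwf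
    have hB : ev v B = true := hpc ▸ ihp hp (fun x hx => h x (by simp [PT.openAss]; tauto))
    show ev v q.concl = true
    apply ihq hq
    rintro ⟨ℓ', A'⟩ hx
    by_cases hc : ℓ' = ℓ
    · subst hc; rw [hℓ A' hx]; simp [ev, hB]
    · exact h (ℓ', A') (by simp [PT.openAss, Multiset.mem_filter]; tauto)
  | tr ℓA ℓAB A B p q ihp ihq =>
    intro hwf h
    obtain ⟨hp, hq, hpq, hA, -, hAB, -⟩ := hwf
    show ev v p.concl = true
    by_cases hvA : ev v A = true
    · apply ihp hp
      rintro ⟨ℓ', A'⟩ hx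
      by_cases hc : ℓ' = ℓA
      · subst hc; rw [hA A' hx]; exact hvA
      · exact h (ℓ', A') (by simp [PT.openAss, Multiset.mem_filter]; tauto)
    · rw [hpq]
      apply ihq hq
      rintro ⟨ℓ', A'⟩ hx
      by_cases hc : ℓ' = ℓAB
      · subst hc; rw [hAB A' hx]
        have hf : ev v A = false := by simpa using hvA
        simp [ev, hf]
      · exact h (ℓ', A') (by simp [PT.openAss, Multiset.mem_filter]; tauto)
  | impE ℓ A B p q r ihp ihq ihr =>
    intro hwf h
    obtain ⟨hp, hq, hr, hpc, hqc, hℓ, -⟩ := hwf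
    have hAB : ev v (Formula.imp A B) = true :=
      hpc ▸ ihp hp (fun x hx => h x (by simp [PT.openAss]; tauto))
    have hA : ev v A = true := hqc ▸ ihq hq (fun x hx => h x (by simp [PT.openAss]; tauto))
    simp [ev, hA] at hAB
    show ev v r.concl = true
    apply ihr hr
    rintro ⟨ℓ', A'⟩ hx
    by_cases hc : ℓ' = ℓ
    · subst hc; rw [hℓ A' hx]; exact hAB
    · exact h (ℓ', A') (by simp [PT.openAss, Multiset.mem_filter]; tauto)
  | negI ℓA ℓnA A p q ihp ihq =>
    intro hwf h
    obtain ⟨hp, hq, hpq, hA, -, hnA, -⟩ := hwf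
    show ev v p.concl = true
    by_cases hvA : ev v A = true
    · apply ihp hp
      rintro ⟨ℓ', A'⟩ hx
      by_cases hc : ℓ' = ℓA
      · subst hc; rw [hA A' hx]; exact hvA
      · exact h (ℓ', A') (by simp [PT.openAss, Multiset.mem_filter]; tauto)
    · rw [hpq]
      apply ihq hq
      rintro ⟨ℓ', A'⟩ hx
      by_cases hc : ℓ' = ℓnA
      · subst hc; rw [hnA A' hx]; simp [ev]; simpa using hvA
      · exact h (ℓ', A') (by simp [PT.openAss, Multiset.mem_filter]; tauto)
  | negE A C p q ihp ihq =>
    intro hwf h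
    obtain ⟨hp, hq, hpc, hqc⟩ := hwf
    have hnA := ihp hp (fun x hx => h x (by simp [PT.openAss]; tauto))
    have hA := ihq hq (fun x hx => h x (by simp [PT.openAss]; tauto))
    rw [hpc] at hnA; rw [hqc] at hA
    simp [ev, hA] at hnA

/-- The system C is consistent: no atomic formula `p` has a
proof in C, i.e. there is no deduction of an atomic formula from no
undischarged assumptions. -/
theorem consistency (p : ℕ) :
    ¬ ∃ d : PT, d.wf ∧ d.concl = Formula.atom p ∧ d.openAss = 0 := by
  rintro ⟨d, hwf, hc, hopen⟩
  have := sound (fun _ => false) d hwf (by simp [hopen])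
  rw [hc] at this
  simp [ev] at this
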